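/- arXiv:2508.21823 — 5 statements merged into one kernel-verified Lean document; each statement's English description precedes it below -/
import Mathlib

section
/- Karamata's inequality: if y ∈ ℝ^N majorizes x ∈ ℝ^N, then for every concave function h : ℝ → ℝ, ∑ₙ h(xₙ) ≥ ∑ₙ h(yₙ). -/
open Finset

/-- The sum of the `k` largest components of `v`, expressed as the supremum of
sums over subsets of cardinality `k`. -/
noncomputable def topSum {N : ℕ} (v : Fin N → ℝ) (k : ℕ) : ℝ :=
  sSup ((fun s : Finset (Fin N) => ∑ i ∈ s, v i) '' {s : Finset (Fin N) | s.card = k})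

/-- `y` majorizes `x`: for every `k ≤ N` the sum of the `k` largest components of
`y` is at least that of `x`, and the total sums agree. -/
def Majorizes {N : ℕ} (y x : Fin N → ℝ) : Prop :=
  (∀ k, k ≤ N → topSum x k ≤ topSum y k) ∧ ∑ i, y i = ∑ i, x i

noncomputable def supgrad (h : ℝ → ℝ) (p : ℝ) : ℝ :=
  sSup ((fun x => (h x - h p) / (x - p)) '' Set.Ioi p)

section supgrad

variable {h : ℝ → ℝ}

lemma slope_anti (hconc : ConcaveOn ℝ Set.univ h) {x y z : ℝ} (hxy : x < y) (hyz : y < z) :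
    (h z - h y) / (z - y) ≤ (h y - h x) / (y - x) :=
  hconc.slope_anti_adjacent (Set.mem_univ x) (Set.mem_univ z) hxy hyz

lemma supgrad_bddAbove (hconc : ConcaveOn ℝ Set.univ h) (p : ℝ) :
    BddAbove ((fun x => (h x - h p) / (x - p)) '' Set.Ioi p) := by
  refine ⟨(h p - h (p - 1)) / (p - (p - 1)), ?_⟩
  rintro r ⟨x, hx, rfl⟩
  exact slope_anti hconc (by linarith : p - 1 < p) hx

lemma le_supgrad (hconc : ConcaveOn ℝ Set.univ h) {p x : ℝ} (hx : p < x) : (h x - h p) / (x - p) ≤ supgrad h p :=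
  le_csSup (supgrad_bddAbove hconc p) ⟨x, hx, rfl⟩

lemma supgrad_le (hconc : ConcaveOn ℝ Set.univ h) {p x : ℝ} (hx : x < p) : supgrad h p ≤ (h p - h x) / (p - x) := by
  have hne : ((fun x => (h x - h p) / (x - p)) '' Set.Ioi p).Nonempty :=
    ⟨_, ⟨p + 1, by simp, rfl⟩⟩
  apply csSup_le hne
  rintro r ⟨y, hy, rfl⟩
  exact slope_anti hconc hx hy

lemma supgrad_super (hconc : ConcaveOn ℝ Set.univ h) (p x : ℝ) : h x ≤ h p + supgrad h p * (x - p) := by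
  rcases lt_trichotomy x p with hlt | rfl | hgt
  · have h1 := supgrad_le hconc hlt
    have h2 : p - x > 0 := by linarith
    rw [le_div_iff₀ h2] at h1
    nlinarith
  · simp
  · have h1 := le_supgrad hconc hgt
    have h2 : x - p > 0 := by linarith
    rw [div_le_iff₀ h2] at h1
    nlinarith

lemma supgrad_anti (hconc : ConcaveOn ℝ Set.univ h) {p q : ℝ} (hpq : p ≤ q) : supgrad h q ≤ supgrad h p := by
  rcases eq_or_lt_of_le hpq with rfl | hlt
  · exact le_refl _
  · exact le_trans (supgrad_le hconc hlt) (le_supgrad hconc hlt)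

end supgrad

lemma topSum_comp_equiv {N : ℕ} (v : Fin N → ℝ) (e : Equiv.Perm (Fin N)) (k : ℕ) :
    topSum (v ∘ e) k = topSum v k := by
  unfold topSum
  apply congrArg sSup
  ext r
  constructor
  · rintro ⟨s, hs, rfl⟩
    refine ⟨s.image e, ?_, ?_⟩
    · simpa [Finset.card_image_of_injective _ e.injective] using hs
    · dsimp only
      rw [Finset.sum_image (fun a _ b _ hab => e.injective hab)]
      rfl
  · rintro ⟨t, ht, rfl⟩
    refine ⟨t.image e.symm, ?_, ?_⟩
    · simpa [Finset.card_image_of_injective _ e.symm.injective] using ht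
    · dsimp only
      rw [Finset.sum_image (fun a _ b _ hab => e.symm.injective hab)]
      simp

lemma strictMono_val_le {k N : ℕ} {f : Fin k → Fin N} (hf : StrictMono f) (j : Fin k) :
    (j : ℕ) ≤ (f j : ℕ) := by
  have key : ∀ n : ℕ, ∀ j : Fin k, (j : ℕ) = n → n ≤ (f j : ℕ) := by
    intro n
    induction n with
    | zero => intro j _; exact Nat.zero_le _
    | succ n ih =>
      intro j hj
      have hn : n < k := by omega
      have h1 := ih ⟨n, hn⟩ rfl
      have h2 : f ⟨n, hn⟩ < f j := hf (by simp [Fin.lt_def, hj])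
      rw [Fin.lt_def] at h2
      omega
  exact key _ j rfl

lemma topSum_antitone {N k : ℕ} (w : Fin N → ℝ) (hw : Antitone w) (hk : k ≤ N) :
    topSum w k = ∑ j : Fin k, w (Fin.castLE hk j) := by
  apply IsGreatest.csSup_eq
  constructor
  · refine ⟨Finset.image (Fin.castLE hk) Finset.univ, ?_, ?_⟩
    · simp [Finset.card_image_of_injective _ (Fin.castLE_injective hk)]
    · dsimp only
      rw [Finset.sum_image (fun a _ b _ hab => Fin.castLE_injective hk hab)]
  · rintro r ⟨s, hs, rfl⟩
    simp only [Set.mem_setOf_eq] at hs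
    have hseq : s = Finset.univ.image (s.orderEmbOfFin hs) := by
      apply Finset.coe_injective
      rw [Finset.coe_image, Finset.coe_univ, Set.image_univ, Finset.range_orderEmbOfFin]
    have h1 : ∑ i ∈ Finset.univ.image (s.orderEmbOfFin hs), w i
        = ∑ j : Fin k, w (s.orderEmbOfFin hs j) :=
      Finset.sum_image (fun a _ b _ hab => (s.orderEmbOfFin hs).injective hab)
    rw [← hseq] at h1
    calc ∑ i ∈ s, w i
        = ∑ j : Fin k, w (s.orderEmbOfFin hs j) := h1
      _ ≤ ∑ j : Fin k, w (Fin.castLE hk j) := by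
          apply Finset.sum_le_sum
          intro j _
          apply hw
          rw [Fin.le_def]
          exact strictMono_val_le (s.orderEmbOfFin hs).strictMono j

lemma abel_le {c D : ℕ → ℝ} (hc : ∀ n, c n ≤ c (n + 1)) (hD : ∀ n, 0 ≤ D n)
    (hD0 : D 0 = 0) (N : ℕ) :
    ∑ n ∈ Finset.range N, c n * (D (n + 1) - D n) ≤ c N * D N := by
  induction N with
  | zero => simp [hD0]
  | succ N ih =>
    rw [Finset.sum_range_succ]
    have h1 : c N * D (N + 1) ≤ c (N + 1) * D (N + 1) :=
      mul_le_mul_of_nonneg_right (hc N) (hD _)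
    have h2 : c N * (D (N + 1) - D N) = c N * D (N + 1) - c N * D N := by ring
    linarith

/-- Karamata's inequality: if `y` majorizes `x`, then for every concave
`h : ℝ → ℝ`, `∑ h(xₙ) ≥ ∑ h(yₙ)`. -/
theorem stmt4 {N : ℕ} (x y : Fin N → ℝ) (hmaj : Majorizes y x)
    (h : ℝ → ℝ) (hconc : ConcaveOn ℝ Set.univ h) :
    ∑ i, h (y i) ≤ ∑ i, h (x i) := by
  obtain ⟨hmaj1, hmaj2⟩ := hmaj
  rcases Nat.eq_zero_or_pos N with rfl | hN
  · simp
  -- sorted decreasing rearrangements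
  set ex : Equiv.Perm (Fin N) := (Fin.revPerm).trans (Tuple.sort x) with hex
  set ey : Equiv.Perm (Fin N) := (Fin.revPerm).trans (Tuple.sort y) with hey
  set b : Fin N → ℝ := x ∘ ex with hb
  set a : Fin N → ℝ := y ∘ ey with ha
  have hbanti : Antitone b := by
    intro i j hij
    exact Tuple.monotone_sort x (Fin.rev_le_rev.mpr hij)
  have haanti : Antitone a := by
    intro i j hij
    exact Tuple.monotone_sort y (Fin.rev_le_rev.mpr hij)
  -- prefix sums of the sorted sequences compute topSum
  have hbtop : ∀ k (hk : k ≤ N), topSum x k = ∑ j : Fin k, b (Fin.castLE hk j) := by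
    intro k hk
    rw [← topSum_comp_equiv x ex k, topSum_antitone b hbanti hk]
  have hatop : ∀ k (hk : k ≤ N), topSum y k = ∑ j : Fin k, a (Fin.castLE hk j) := by
    intro k hk
    rw [← topSum_comp_equiv y ey k, topSum_antitone a haanti hk]
  have hbsum : ∑ i, b i = ∑ i, x i := Equiv.sum_comp ex x
  have hasum : ∑ i, a i = ∑ i, y i := Equiv.sum_comp ey y
  -- ℕ-indexed data
  set d : ℕ → ℝ := fun n => if hn : n < N then a ⟨n, hn⟩ - b ⟨n, hn⟩ else 0 with hd
  set D : ℕ → ℝ := fun k => ∑ n ∈ Finset.range k, d n with hD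
  set c : ℕ → ℝ := fun n =>
    supgrad h (b ⟨min n (N - 1), by omega⟩) with hc
  have hcmono : ∀ n, c n ≤ c (n + 1) := by
    intro n
    apply supgrad_anti hconc
    apply hbanti
    rw [Fin.le_def]
    simp only
    omega
  -- D k for k ≤ N
  have hDk : ∀ k (hk : k ≤ N), D k = topSum y k - topSum x k := by
    intro k hk
    rw [hatop k hk, hbtop k hk, hD]
    simp only
    rw [← Fin.sum_univ_eq_sum_range d k, ← Finset.sum_sub_distrib]
    apply Finset.sum_congr rfl
    intro j _
    have hj : (j : ℕ) < N := lt_of_lt_of_le j.isLt hk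
    simp only [hd, dif_pos hj]
    rfl
  have hDN : D N = 0 := by
    rw [hDk N le_rfl, hatop N le_rfl, hbtop N le_rfl]
    have e1 : ∑ j : Fin N, a (Fin.castLE le_rfl j) = ∑ i, a i := by
      apply Finset.sum_congr rfl; intro j _; congr 1
    have e2 : ∑ j : Fin N, b (Fin.castLE le_rfl j) = ∑ i, b i := by
      apply Finset.sum_congr rfl; intro j _; congr 1
    rw [e1, e2, hasum, hbsum, hmaj2]
    ring
  have hDnonneg : ∀ n, 0 ≤ D n := by
    intro n
    rcases le_or_gt n N with hn | hn
    · rw [hDk n hn]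
      have := hmaj1 n hn
      linarith
    · have : D n = D N := by
        rw [hD]
        simp only
        apply (Finset.sum_subset (Finset.range_subset_range.mpr hn.le) ?_).symm
        intro m _ hm
        rw [Finset.mem_range, not_lt] at hm
        simp [hd, Nat.not_lt.mpr (le_trans (le_of_eq rfl) hm), dif_neg]
      rw [this, hDN]
  have hD0 : D 0 = 0 := by simp [hD]
  -- the key chain
  have key : ∑ i, (h (a i) - h (b i)) ≤ 0 := by
    have step1 : ∑ i, (h (a i) - h (b i)) ≤ ∑ i : Fin N, c i * d i := by
      apply Finset.sum_le_sum
      intro i _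
      have hi : (i : ℕ) < N := i.isLt
      have hfin : (⟨min (i : ℕ) (N - 1), by omega⟩ : Fin N) = i := by
        apply Fin.ext
        simp only
        omega
      have hci : c i = supgrad h (b i) := by
        simp only [hc]
        rw [hfin]
      have hdi : d i = a i - b i := by
        simp only [hd, dif_pos hi]
      rw [hci, hdi]
      have := supgrad_super hconc (b i) (a i)
      linarith
    have step2 : ∑ i : Fin N, c i * d i = ∑ n ∈ Finset.range N, c n * d n :=
      Fin.sum_univ_eq_sum_range (fun n => c n * d n) N
    have step3 : ∀ n, d n = D (n + 1) - D n := by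
      intro n
      rw [hD]
      simp only
      rw [Finset.sum_range_succ]
      ring
    have step4 : ∑ n ∈ Finset.range N, c n * d n
        = ∑ n ∈ Finset.range N, c n * (D (n + 1) - D n) := by
      apply Finset.sum_congr rfl
      intro n _
      rw [step3]
    have step5 := abel_le hcmono hDnonneg hD0 N
    rw [hDN] at step5
    simp only [mul_zero] at step5
    linarith [step1, step2.le, step4.le, step5]
  -- conclude
  have hha : ∑ i, h (a i) = ∑ i, h (y i) := Equiv.sum_comp ey (fun i => h (y i))
  have hhb : ∑ i, h (b i) = ∑ i, h (x i) := Equiv.sum_comp ex (fun i => h (x i))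
  rw [Finset.sum_sub_distrib, hha, hhb] at key
  linarith
end

section
/- Converse of Karamata: let x, y ∈ ℝ^N have equal total sums. If for every concave function h : ℝ → ℝ one has ∑ₙ h(xₙ) ≥ ∑ₙ h(yₙ), then y majorizes x. -/
/-- There is a set of `k` indices carrying the `k` largest values of `y`. -/
lemma exists_topSet {N : ℕ} (y : Fin N → ℝ) (k : ℕ) (hk : k ≤ N) :
    ∃ T : Finset (Fin N), T.card = k ∧ ∀ i ∈ T, ∀ j ∉ T, y j ≤ y i := by
  induction k with
  | zero => exact ⟨∅, rfl, by simp⟩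
  | succ k ih =>
    obtain ⟨T, hcard, hT⟩ := ih (Nat.le_of_succ_le hk)
    have hTc : Tᶜ.Nonempty := by
      rw [← Finset.card_pos, Finset.card_compl, hcard, Fintype.card_fin]
      omega
    obtain ⟨j, hjc, hj⟩ := Finset.exists_max_image Tᶜ y hTc
    have hjT : j ∉ T := Finset.mem_compl.mp hjc
    refine ⟨insert j T, by rw [Finset.card_insert_of_notMem hjT, hcard], ?_⟩
    intro i hi l hl
    rcases Finset.mem_insert.mp hi with rfl | hiT
    · exact hj l (Finset.mem_compl.mpr fun hlT => hl (Finset.mem_insert_of_mem hlT))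
    · exact hT i hiT l fun hlT => hl (Finset.mem_insert_of_mem hlT)

lemma min_eq_sub_max (u t : ℝ) : min u t = u - max (u - t) 0 := by
  rcases le_total u t with hut | hut
  · rw [min_eq_left hut, max_eq_right (by linarith)]; ring
  · rw [min_eq_right hut, max_eq_left (by linarith)]; ring

/-- Converse of Karamata: if `x` and `y` have equal total sums and
`∑ h(xₙ) ≥ ∑ h(yₙ)` for every concave `h : ℝ → ℝ`, then `y` majorizes `x`. -/
theorem stmt5 {N : ℕ} (x y : Fin N → ℝ)
    (hsum : ∑ i, y i = ∑ i, x i)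
    (h : ∀ h : ℝ → ℝ, ConcaveOn ℝ Set.univ h → ∑ i, h (y i) ≤ ∑ i, h (x i)) :
    Majorizes y x := by
  refine ⟨fun k hk => ?_, hsum⟩
  -- the set of sums over cardinality-k subsets is finite and nonempty
  have hfin : ∀ v : Fin N → ℝ,
      ((fun s : Finset (Fin N) => ∑ i ∈ s, v i) '' {s : Finset (Fin N) | s.card = k}).Finite :=
    fun v => Set.Finite.image _ (Set.toFinite _)
  have hne : ∀ v : Fin N → ℝ,
      ((fun s : Finset (Fin N) => ∑ i ∈ s, v i) '' {s : Finset (Fin N) | s.card = k}).Nonempty := by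
    intro v
    obtain ⟨s, _, hs⟩ := Finset.exists_subset_card_eq (s := (Finset.univ : Finset (Fin N))) (n := k)
      (by simpa using hk)
    exact ⟨∑ i ∈ s, v i, ⟨s, hs, rfl⟩⟩
  rcases Nat.eq_zero_or_pos k with rfl | hkpos
  · -- k = 0 : both sides are 0
    have h0 : ∀ v : Fin N → ℝ, topSum v 0 = 0 := by
      intro v
      have : ((fun s : Finset (Fin N) => ∑ i ∈ s, v i) '' {s : Finset (Fin N) | s.card = 0})
          = {0} := by
        ext r
        constructor
        · rintro ⟨s, hs, rfl⟩
          simp only [Set.mem_setOf_eq, Finset.card_eq_zero] at hs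
          simp [hs]
        · rintro rfl
          exact ⟨∅, by simp, by simp⟩
      rw [topSum, this, csSup_singleton]
    rw [h0, h0]
  -- choose the k largest indices of y and the threshold t
  obtain ⟨T, hTcard, hT⟩ := exists_topSet y k hk
  have hTne : T.Nonempty := by rw [← Finset.card_pos, hTcard]; exact hkpos
  obtain ⟨i₀, hi₀, hmin⟩ := Finset.exists_min_image T y hTne
  set t := y i₀ with ht
  -- the key inequality from concavity of u ↦ min u t
  have hcc : ConcaveOn ℝ Set.univ (fun u : ℝ => min u t) := by
    have base : ConcaveOn ℝ (Set.univ : Set ℝ) (id ⊓ fun _ : ℝ => t) :=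
      (concaveOn_id convex_univ).inf (concaveOn_const _ convex_univ)
    simpa [Pi.inf_def] using base
  have hmins := h _ hcc
  have key : ∑ i, max (x i - t) 0 ≤ ∑ i, max (y i - t) 0 := by
    have e1 : ∑ i, min (y i) t = ∑ i, y i - ∑ i, max (y i - t) 0 := by
      rw [← Finset.sum_sub_distrib]; exact Finset.sum_congr rfl fun i _ => min_eq_sub_max _ _
    have e2 : ∑ i, min (x i) t = ∑ i, x i - ∑ i, max (x i - t) 0 := by
      rw [← Finset.sum_sub_distrib]; exact Finset.sum_congr rfl fun i _ => min_eq_sub_max _ _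
    simp only [e1, e2] at hmins
    linarith
  -- topSum x k is attained at some set s
  have hmem := (hne x).csSup_mem (hfin x)
  obtain ⟨s, hs, hsx⟩ := hmem
  simp only [Set.mem_setOf_eq] at hs
  -- ∑_{i∈T} y i ≤ topSum y k
  have hTle : ∑ i ∈ T, y i ≤ topSum y k :=
    le_csSup (hfin y).bddAbove ⟨T, hTcard, rfl⟩
  -- main chain
  have step1 : topSum x k ≤ k * t + ∑ i, max (x i - t) 0 := by
    rw [topSum, ← hsx]
    calc ∑ i ∈ s, x i ≤ ∑ i ∈ s, (t + max (x i - t) 0) := by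
          refine Finset.sum_le_sum fun i _ => ?_
          have := le_max_left (x i - t) 0
          linarith
      _ = k * t + ∑ i ∈ s, max (x i - t) 0 := by
          rw [Finset.sum_add_distrib, Finset.sum_const, hs, nsmul_eq_mul]
      _ ≤ k * t + ∑ i, max (x i - t) 0 := by
          have := Finset.sum_le_sum_of_subset_of_nonneg (Finset.subset_univ s)
            fun i _ _ => le_max_right (x i - t) 0
          linarith
  have step2 : k * t + ∑ i, max (y i - t) 0 = ∑ i ∈ T, y i := by
    have e3 : ∑ i, max (y i - t) 0 = ∑ i ∈ T, max (y i - t) 0 := by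
      rw [← Finset.sum_subset (Finset.subset_univ T)]
      intro j _ hj
      have : y j ≤ t := hT i₀ hi₀ j hj
      rw [max_eq_right (by linarith)]
    have e4 : ∑ i ∈ T, max (y i - t) 0 = ∑ i ∈ T, (y i - t) :=
      Finset.sum_congr rfl fun i hi => max_eq_left (by have := hmin i hi; linarith)
    rw [e3, e4, Finset.sum_sub_distrib, Finset.sum_const, hTcard, nsmul_eq_mul]
    ring
  calc topSum x k ≤ k * t + ∑ i, max (x i - t) 0 := step1
    _ ≤ k * t + ∑ i, max (y i - t) 0 := by linarith
    _ = ∑ i ∈ T, y i := step2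
    _ ≤ topSum y k := hTle
end

section
/- If y ∈ ℝ^N majorizes x ∈ ℝ^N, then there exists a doubly stochastic N×N matrix D such that x = D y. -/
lemma le_topSum {N k : ℕ} (v : Fin N → ℝ) (s : Finset (Fin N)) (hs : s.card = k) :
    ∑ i ∈ s, v i ≤ topSum v k := by
  apply le_csSup
  · exact (Set.toFinite _).image _ |>.bddAbove
  · exact ⟨s, hs, rfl⟩

lemma topSum_le {N k : ℕ} (v : Fin N → ℝ) (hk : k ≤ N) (B : ℝ)
    (hB : ∀ s : Finset (Fin N), s.card = k → ∑ i ∈ s, v i ≤ B) : topSum v k ≤ B := by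
  apply csSup_le
  · obtain ⟨s, -, hs⟩ := Finset.exists_subset_card_eq
      (show k ≤ (Finset.univ : Finset (Fin N)).card by simpa using hk)
    exact ⟨_, ⟨s, hs, rfl⟩⟩
  · rintro b ⟨s, hs, rfl⟩
    exact hB s hs

lemma antitone_sum_le (g : ℕ → ℝ) (hg : Antitone g) (t : Finset ℕ) :
    ∑ k ∈ t, g k ≤ ∑ k ∈ Finset.range t.card, g k := by
  induction t using Finset.strongInduction with
  | _ t ih =>
    rcases t.eq_empty_or_nonempty with rfl | ht
    · simp
    · set a := t.max' ht with ha_def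
      have ha : a ∈ t := t.max'_mem ht
      have hcard : 1 ≤ t.card := Finset.card_pos.2 ht
      have hle : t.card - 1 ≤ a := by
        have hsub : t ⊆ Finset.range (a + 1) := fun b hb =>
          Finset.mem_range.2 (Nat.lt_succ_of_le (t.le_max' b hb))
        have := Finset.card_le_card hsub
        simp only [Finset.card_range] at this
        omega
      have h1 := ih (t.erase a) (Finset.erase_ssubset ha)
      have hc : (t.erase a).card = t.card - 1 := Finset.card_erase_of_mem ha
      calc ∑ k ∈ t, g k = ∑ k ∈ t.erase a, g k + g a := by
            rw [Finset.sum_erase_add _ _ ha]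
        _ ≤ ∑ k ∈ Finset.range (t.card - 1), g k + g (t.card - 1) := by
            refine add_le_add ?_ (hg hle)
            simpa [hc] using h1
        _ = ∑ k ∈ Finset.range t.card, g k := by
            have h2 : t.card - 1 + 1 = t.card := by omega
            rw [← Finset.sum_range_succ, h2]

lemma abel_identity (d w : ℕ → ℝ) (n : ℕ) :
    ∑ k ∈ Finset.range n, d k * w k
      = ∑ m ∈ Finset.range n, (d m - d (m + 1)) * (∑ k ∈ Finset.range (m + 1), w k)
        + d n * ∑ k ∈ Finset.range n, w k := by
  induction n with
  | zero => simp
  | succ n ih =>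
    rw [Finset.sum_range_succ, ih,
      Finset.sum_range_succ (fun m => (d m - d (m + 1)) * ∑ k ∈ Finset.range (m + 1), w k),
      Finset.sum_range_succ w]
    ring

lemma abel_le_s6 (d u v : ℕ → ℝ) (n : ℕ) (hd : Antitone d)
    (h : ∀ m, m ≤ n → ∑ k ∈ Finset.range m, u k ≤ ∑ k ∈ Finset.range m, v k)
    (he : ∑ k ∈ Finset.range n, u k = ∑ k ∈ Finset.range n, v k) :
    ∑ k ∈ Finset.range n, d k * u k ≤ ∑ k ∈ Finset.range n, d k * v k := by
  rw [abel_identity d u n, abel_identity d v n, he]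
  have hs : ∑ m ∈ Finset.range n, (d m - d (m + 1)) * (∑ k ∈ Finset.range (m + 1), u k)
      ≤ ∑ m ∈ Finset.range n, (d m - d (m + 1)) * (∑ k ∈ Finset.range (m + 1), v k) := by
    refine Finset.sum_le_sum fun m hm => ?_
    refine mul_le_mul_of_nonneg_left (h (m + 1) (Finset.mem_range.1 hm)) ?_
    exact sub_nonneg.2 (hd (Nat.le_succ m))
  linarith

lemma key_ineq {N : ℕ} (hN : 0 < N) (x y : Fin N → ℝ) (hmaj : Majorizes y x)
    (c : Fin N → ℝ) :
    ∃ σ : Equiv.Perm (Fin N), ∑ i, c i * x i ≤ ∑ i, c i * y (σ i) := by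
  classical
  obtain ⟨τ, hτ⟩ : ∃ τ : Equiv.Perm (Fin N), Antitone (fun i => c (τ i)) :=
    ⟨Tuple.sort (fun i => -c i), fun a b hab => by
      simpa using Tuple.monotone_sort (fun i => -c i) hab⟩
  obtain ⟨ρ, hρ⟩ : ∃ ρ : Equiv.Perm (Fin N), Antitone (fun i => y (ρ i)) :=
    ⟨Tuple.sort (fun i => -y i), fun a b hab => by
      simpa using Tuple.monotone_sort (fun i => -y i) hab⟩
  set clamp : ℕ → Fin N := fun k => ⟨min k (N - 1), by omega⟩ with hclampdef
  have hclamp_mono : Monotone clamp := fun a b hab => by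
    simp only [hclampdef, Fin.mk_le_mk]
    exact min_le_min hab le_rfl
  have hclamp_lt : ∀ k (h : k < N), clamp k = ⟨k, h⟩ := by
    intro k h
    simp only [hclampdef, Fin.mk.injEq]
    omega
  have hclamp_fin : ∀ i : Fin N, clamp (i : ℕ) = i := by
    intro i
    rw [hclamp_lt _ i.isLt]
  set d : ℕ → ℝ := fun k => c (τ (clamp k)) with hddef
  set u : ℕ → ℝ := fun k => x (τ (clamp k)) with hudef
  set v : ℕ → ℝ := fun k => y (ρ (clamp k)) with hvdef
  have hd : Antitone d := fun a b hab => hτ (hclamp_mono hab)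
  have hv : Antitone v := fun a b hab => hρ (hclamp_mono hab)
  have hU : ∀ m, m ≤ N → ∑ k ∈ Finset.range m, u k ≤ topSum x m := by
    intro m hm
    have hinj : ∀ a ∈ Finset.range m, ∀ b ∈ Finset.range m,
        τ (clamp a) = τ (clamp b) → a = b := by
      intro a ha b hb hab
      rw [Finset.mem_range] at ha hb
      have h2 := τ.injective hab
      rw [hclamp_lt a (lt_of_lt_of_le ha hm), hclamp_lt b (lt_of_lt_of_le hb hm)] at h2
      exact congrArg Fin.val h2
    have hcard : ((Finset.range m).image (fun k => τ (clamp k))).card = m := by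
      rw [Finset.card_image_of_injOn
        (fun a ha b hb hab => hinj a (Finset.mem_coe.1 ha) b (Finset.mem_coe.1 hb) hab),
        Finset.card_range]
    have hsum : ∑ i ∈ (Finset.range m).image (fun k => τ (clamp k)), x i
        = ∑ k ∈ Finset.range m, u k := Finset.sum_image hinj
    rw [← hsum]
    exact le_topSum x _ hcard
  have hV : ∀ m, m ≤ N → topSum y m ≤ ∑ k ∈ Finset.range m, v k := by
    intro m hm
    apply topSum_le y hm
    intro s hs
    have hinj : ∀ a ∈ s, ∀ b ∈ s,
        ((ρ.symm a : Fin N) : ℕ) = ((ρ.symm b : Fin N) : ℕ) → a = b := by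
      intro a _ b _ hab
      exact ρ.symm.injective (Fin.val_injective hab)
    have hcardt : (s.image (fun i => ((ρ.symm i : Fin N) : ℕ))).card = m := by
      rw [Finset.card_image_of_injOn
        (fun a ha b hb hab => hinj a (Finset.mem_coe.1 ha) b (Finset.mem_coe.1 hb) hab), hs]
    have hsum : ∑ k ∈ s.image (fun i => ((ρ.symm i : Fin N) : ℕ)), v k = ∑ i ∈ s, y i := by
      rw [Finset.sum_image hinj]
      refine Finset.sum_congr rfl fun i _ => ?_
      simp only [hvdef]
      rw [hclamp_fin (ρ.symm i)]
      simp
    calc ∑ i ∈ s, y i = ∑ k ∈ s.image (fun i => ((ρ.symm i : Fin N) : ℕ)), v k := hsum.symm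
      _ ≤ ∑ k ∈ Finset.range (s.image (fun i => ((ρ.symm i : Fin N) : ℕ))).card, v k :=
          antitone_sum_le v hv _
      _ = ∑ k ∈ Finset.range m, v k := by rw [hcardt]
  have hUN : ∑ k ∈ Finset.range N, u k = ∑ i, x i := by
    rw [← Fin.sum_univ_eq_sum_range u N]
    calc ∑ i : Fin N, u (i : ℕ) = ∑ i : Fin N, x (τ i) := by
          refine Finset.sum_congr rfl fun i _ => ?_
          simp only [hudef]
          rw [hclamp_fin i]
      _ = ∑ i, x i := Equiv.sum_comp τ x
  have hVN : ∑ k ∈ Finset.range N, v k = ∑ i, y i := by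
    rw [← Fin.sum_univ_eq_sum_range v N]
    calc ∑ i : Fin N, v (i : ℕ) = ∑ i : Fin N, y (ρ i) := by
          refine Finset.sum_congr rfl fun i _ => ?_
          simp only [hvdef]
          rw [hclamp_fin i]
      _ = ∑ i, y i := Equiv.sum_comp ρ y
  have habel : ∑ k ∈ Finset.range N, d k * u k ≤ ∑ k ∈ Finset.range N, d k * v k := by
    apply abel_le_s6 d u v N hd
    · intro m hm
      calc ∑ k ∈ Finset.range m, u k ≤ topSum x m := hU m hm
        _ ≤ topSum y m := hmaj.1 m hm
        _ ≤ ∑ k ∈ Finset.range m, v k := hV m hm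
    · rw [hUN, hVN, hmaj.2]
  refine ⟨τ.symm.trans ρ, ?_⟩
  have h1 : ∑ k ∈ Finset.range N, d k * u k = ∑ i, c i * x i := by
    rw [← Fin.sum_univ_eq_sum_range (fun k => d k * u k) N]
    calc ∑ i : Fin N, d (i : ℕ) * u (i : ℕ) = ∑ i : Fin N, c (τ i) * x (τ i) := by
          refine Finset.sum_congr rfl fun i _ => ?_
          simp only [hddef, hudef]
          rw [hclamp_fin i]
      _ = ∑ i, c i * x i := Equiv.sum_comp τ (fun j => c j * x j)
  have h2 : ∑ k ∈ Finset.range N, d k * v k = ∑ i, c i * y ((τ.symm.trans ρ) i) := by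
    rw [← Fin.sum_univ_eq_sum_range (fun k => d k * v k) N]
    calc ∑ i : Fin N, d (i : ℕ) * v (i : ℕ) = ∑ i : Fin N, c (τ i) * y (ρ i) := by
          refine Finset.sum_congr rfl fun i _ => ?_
          simp only [hddef, hvdef]
          rw [hclamp_fin i]
      _ = ∑ i : Fin N, c (τ i) * y (ρ (τ.symm (τ i))) := by simp
      _ = ∑ j, c j * y (ρ (τ.symm j)) := Equiv.sum_comp τ (fun j => c j * y (ρ (τ.symm j)))
      _ = ∑ i, c i * y ((τ.symm.trans ρ) i) := by simp [Equiv.trans_apply]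
  rw [← h1, ← h2]
  exact habel

lemma clm_repr {N : ℕ} (g : (Fin N → ℝ) →L[ℝ] ℝ) (z : Fin N → ℝ) :
    g z = ∑ i, z i * g (Pi.single i 1) := by
  classical
  conv_lhs => rw [pi_eq_sum_univ z]
  rw [map_sum]
  refine Finset.sum_congr rfl fun i _ => ?_
  have : (fun j => if i = j then (1 : ℝ) else 0) = Pi.single i 1 := by
    funext j
    simp [Pi.single_apply, eq_comm]
  rw [map_smul, this, smul_eq_mul]


/-- If `y` majorizes `x`, then there exists a doubly stochastic matrix `D`
with `x = D y`. -/
theorem stmt6 {N : ℕ} (x y : Fin N → ℝ) (hmaj : Majorizes y x) :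
    ∃ D : Matrix (Fin N) (Fin N) ℝ,
      (∀ i j, 0 ≤ D i j) ∧ (∀ i, ∑ j, D i j = 1) ∧ (∀ j, ∑ i, D i j = 1) ∧
      x = D.mulVec y := by
  classical
  rcases Nat.eq_zero_or_pos N with rfl | hN
  · exact ⟨0, fun i => i.elim0, fun i => i.elim0, fun j => j.elim0,
      funext fun i => i.elim0⟩
  set f : Equiv.Perm (Fin N) → (Fin N → ℝ) := fun σ i => y (σ i) with hfdef
  set t : Finset (Fin N → ℝ) := Finset.univ.image f with htdef
  have hx : x ∈ convexHull ℝ (t : Set (Fin N → ℝ)) := by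
    by_contra hxc
    obtain ⟨g, u, hgu, hub⟩ := geometric_hahn_banach_point_closed
      (convex_convexHull ℝ _) (t.finite_toSet.isClosed_convexHull (𝕜 := ℝ)) hxc
    obtain ⟨σ, hσ⟩ := key_ineq hN x y hmaj (fun i => -(g (Pi.single i 1)))
    have hgx : ∑ i, -(g (Pi.single i 1)) * x i = -(g x) := by
      rw [clm_repr g x, ← Finset.sum_neg_distrib]
      exact Finset.sum_congr rfl fun i _ => by ring
    have hgy : ∑ i, -(g (Pi.single i 1)) * y (σ i) = -(g (f σ)) := by
      rw [clm_repr g (f σ), ← Finset.sum_neg_distrib]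
      refine Finset.sum_congr rfl fun i _ => ?_
      simp only [hfdef]
      ring
    have hmem : f σ ∈ convexHull ℝ (t : Set (Fin N → ℝ)) :=
      subset_convexHull ℝ _ (by simp [htdef])
    have := hub (f σ) hmem
    rw [hgx, hgy] at hσ
    linarith
  rw [Finset.convexHull_eq] at hx
  obtain ⟨w, hw0, hw1, hwc⟩ := hx
  rw [Finset.centerMass_eq_of_sum_1 _ _ hw1] at hwc
  have hF : ∀ p ∈ t, ∃ σ : Equiv.Perm (Fin N), f σ = p := by
    intro p hp
    simpa [htdef] using hp
  choose! F hFp using hF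
  refine ⟨Matrix.of fun i j => ∑ p ∈ t, w p * (if F p i = j then 1 else 0), ?_, ?_, ?_, ?_⟩
  · intro i j
    refine Finset.sum_nonneg fun p hp => mul_nonneg (hw0 p hp) ?_
    split <;> norm_num
  · intro i
    simp only [Matrix.of_apply]
    rw [Finset.sum_comm]
    calc ∑ p ∈ t, ∑ j, w p * (if F p i = j then 1 else 0)
        = ∑ p ∈ t, w p := by
          refine Finset.sum_congr rfl fun p _ => ?_
          rw [← Finset.mul_sum]
          simp
      _ = 1 := hw1
  · intro j
    simp only [Matrix.of_apply]
    rw [Finset.sum_comm]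
    calc ∑ p ∈ t, ∑ i, w p * (if F p i = j then 1 else 0)
        = ∑ p ∈ t, w p := by
          refine Finset.sum_congr rfl fun p _ => ?_
          rw [← Finset.mul_sum,
            Equiv.sum_comp (F p) (fun i' => if i' = j then (1 : ℝ) else 0)]
          simp
      _ = 1 := hw1
  · funext i
    have hxi : x i = ∑ p ∈ t, w p * p i := by
      rw [← hwc]
      simp [Finset.sum_apply]
    show x i = ∑ j, (∑ p ∈ t, w p * (if F p i = j then 1 else 0)) * y j
    rw [hxi]
    calc ∑ p ∈ t, w p * p i
        = ∑ p ∈ t, ∑ j, (w p * (if F p i = j then 1 else 0)) * y j := by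
          refine Finset.sum_congr rfl fun p hp => ?_
          have hp' := congrFun (hFp p hp) i
          simp only [hfdef] at hp'
          calc w p * p i = w p * y (F p i) := by rw [← hp']
            _ = ∑ j, (w p * (if F p i = j then 1 else 0)) * y j := by
                simp only [mul_assoc, ← Finset.mul_sum, ite_mul, one_mul, zero_mul]
                rw [Finset.sum_ite_eq]
                simp
      _ = ∑ j, (∑ p ∈ t, w p * (if F p i = j then 1 else 0)) * y j := by
          rw [Finset.sum_comm]
          exact Finset.sum_congr rfl fun j _ => (Finset.sum_mul _ _ _).symm
end

section
/- If x = D y for some doubly stochastic N×N matrix D, then y majorizes x. -/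
lemma key_ineq_s7 {N : ℕ} (y c : Fin N → ℝ) (k : ℕ) (hk : k ≤ N)
    (hc0 : ∀ j, 0 ≤ c j) (hc1 : ∀ j, c j ≤ 1) (hsum : ∑ j, c j = (k : ℝ)) :
    ∃ t : Finset (Fin N), t.card = k ∧ ∑ j, c j * y j ≤ ∑ j ∈ t, y j := by
  rcases Nat.eq_zero_or_pos k with rfl | hkpos
  · refine ⟨∅, rfl, ?_⟩
    have hz : ∀ j ∈ Finset.univ, c j = 0 := by
      rw [← Finset.sum_eq_zero_iff_of_nonneg (fun j _ => hc0 j)]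
      simpa using hsum
    simp only [Finset.sum_empty]
    have : ∑ j, c j * y j = 0 := Finset.sum_eq_zero (fun j hj => by rw [hz j hj, zero_mul])
    linarith
  · set σ := Tuple.sort (fun i => -y i) with hσ
    have hanti : ∀ i j : Fin N, i ≤ j → y (σ j) ≤ y (σ i) := by
      intro i j hij
      have := Tuple.monotone_sort (fun i => -y i) hij
      simp only [Function.comp_apply] at this
      linarith
    have hkN : k - 1 < N := by omega
    set m := y (σ ⟨k - 1, hkN⟩) with hm
    set t : Finset (Fin N) := Finset.univ.map ((Fin.castLEEmb hk).trans σ.toEmbedding) with ht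
    have hcard : t.card = k := by simp [ht]
    have hmem : ∀ j, j ∈ t ↔ ((σ.symm j : Fin N) : ℕ) < k := by
      intro j
      simp only [ht, Finset.mem_map, Finset.mem_univ, true_and]
      constructor
      · rintro ⟨i, rfl⟩
        simp only [Function.Embedding.trans_apply, Equiv.coe_toEmbedding,
          Equiv.symm_apply_apply, Fin.castLEEmb_apply]
        exact i.isLt
      · intro h
        refine ⟨⟨(σ.symm j : ℕ), h⟩, ?_⟩
        simp only [Function.Embedding.trans_apply, Equiv.coe_toEmbedding, Fin.castLEEmb_apply]
        have : Fin.castLE hk ⟨(σ.symm j : ℕ), h⟩ = σ.symm j := by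
          apply Fin.ext; simp
        rw [this, Equiv.apply_symm_apply]
    have hge : ∀ j ∈ t, m ≤ y j := by
      intro j hj
      rw [hmem] at hj
      have : σ (σ.symm j) = j := Equiv.apply_symm_apply σ j
      rw [← this]
      apply hanti
      exact Fin.le_def.mpr (by simp; omega)
    have hle : ∀ j ∉ t, y j ≤ m := by
      intro j hj
      rw [hmem] at hj
      push_neg at hj
      have : σ (σ.symm j) = j := Equiv.apply_symm_apply σ j
      rw [← this]
      apply hanti
      exact Fin.le_def.mpr (by simp; omega)
    refine ⟨t, hcard, ?_⟩
    have hsplit : ∑ j, c j * y j = ∑ j ∈ t, c j * y j + ∑ j ∈ tᶜ, c j * y j :=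
      (Finset.sum_add_sum_compl t _).symm
    have hAB : ∑ j ∈ t, c j + ∑ j ∈ tᶜ, c j = (k : ℝ) := by
      rw [Finset.sum_add_sum_compl, hsum]
    have hb1 : ∑ j ∈ t, c j * y j ≤ ∑ j ∈ t, (y j - (1 - c j) * m) := by
      apply Finset.sum_le_sum
      intro j hj
      nlinarith [hc1 j, hge j hj]
    have hb2 : ∑ j ∈ tᶜ, c j * y j ≤ ∑ j ∈ tᶜ, c j * m := by
      apply Finset.sum_le_sum
      intro j hj
      have hj' : j ∉ t := Finset.mem_compl.mp hj
      exact mul_le_mul_of_nonneg_left (hle j hj') (hc0 j)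
    have he1 : ∑ j ∈ t, (y j - (1 - c j) * m) =
        ∑ j ∈ t, y j - ((k : ℝ) - ∑ j ∈ t, c j) * m := by
      rw [Finset.sum_sub_distrib, ← Finset.sum_mul, Finset.sum_sub_distrib]
      simp [hcard]
    have he2 : ∑ j ∈ tᶜ, c j * m = (∑ j ∈ tᶜ, c j) * m := (Finset.sum_mul _ _ _).symm
    rw [hsplit]
    rw [he1] at hb1
    rw [he2] at hb2
    have heq : (k : ℝ) - ∑ j ∈ t, c j = ∑ j ∈ tᶜ, c j := by linarith
    rw [heq] at hb1
    linarith

/-- If `x = D y` for a doubly stochastic matrix `D`, then `y` majorizes `x`. -/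
theorem stmt7 {N : ℕ} (x y : Fin N → ℝ) (D : Matrix (Fin N) (Fin N) ℝ)
    (hpos : ∀ i j, 0 ≤ D i j) (hrow : ∀ i, ∑ j, D i j = 1)
    (hcol : ∀ j, ∑ i, D i j = 1) (hx : x = D.mulVec y) :
    Majorizes y x := by
  have hxe : ∀ i, x i = ∑ j, D i j * y j := by
    intro i; rw [hx]; rfl
  constructor
  · intro k hk
    -- bounded above
    have hbdd : BddAbove ((fun s : Finset (Fin N) => ∑ i ∈ s, y i) ''
        {s : Finset (Fin N) | s.card = k}) :=
      (Set.toFinite _).bddAbove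
    have hne : {s : Finset (Fin N) | s.card = k}.Nonempty := by
      obtain ⟨t, _, ht⟩ := Finset.exists_subset_card_eq (s := (Finset.univ : Finset (Fin N))) (n := k)
        (by simpa using hk)
      exact ⟨t, ht⟩
    apply csSup_le (hne.image _)
    rintro v ⟨s, hs, rfl⟩
    have hs' : s.card = k := hs
    set c : Fin N → ℝ := fun j => ∑ i ∈ s, D i j with hc
    have hc0 : ∀ j, 0 ≤ c j := fun j => Finset.sum_nonneg (fun i _ => hpos i j)
    have hc1 : ∀ j, c j ≤ 1 := by
      intro j
      have h1 : c j ≤ ∑ i, D i j :=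
        Finset.sum_le_sum_of_subset_of_nonneg (Finset.subset_univ s) (fun i _ _ => hpos i j)
      rw [hcol j] at h1
      exact h1
    have hcsum : ∑ j, c j = (k : ℝ) := by
      rw [hc]
      rw [Finset.sum_comm]
      calc ∑ i ∈ s, ∑ j, D i j = ∑ i ∈ s, (1 : ℝ) := Finset.sum_congr rfl (fun i _ => hrow i)
      _ = (k : ℝ) := by simp [hs']
    have hxs : ∑ i ∈ s, x i = ∑ j, c j * y j := by
      simp only [hxe, hc]
      rw [Finset.sum_comm]
      exact Finset.sum_congr rfl (fun j _ => by rw [Finset.sum_mul])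
    obtain ⟨t, htc, hineq⟩ := key_ineq_s7 y c k hk hc0 hc1 hcsum
    show ∑ i ∈ s, x i ≤ topSum y k
    rw [hxs]
    refine le_trans hineq (le_csSup hbdd ?_)
    exact ⟨t, htc, rfl⟩
  · have : ∑ i, x i = ∑ i, y i := by
      simp only [hxe]
      rw [Finset.sum_comm]
      calc ∑ j, ∑ i, D i j * y j = ∑ j, (∑ i, D i j) * y j := by
            exact Finset.sum_congr rfl (fun j _ => (Finset.sum_mul _ _ _).symm)
      _ = ∑ j, y j := by simp [hcol]
    linarith
end

section
/- For any concave function h : ℝ → ℝ and any reals a and positive reals b, c, d, e, one has h(a+b+c) + h(a+b+d) + h(a+c+d) + h(a+d+e) ≥ h(a+b) + h(a+d) + h(a+c+d+e) + h(a+b+c+d). -/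
lemma key_concave (h : ℝ → ℝ) (hconc : ConcaveOn ℝ Set.univ h) (x s t : ℝ)
    (hs : 0 < s) (ht : 0 < t) :
    h x + h (x + s + t) ≤ h (x + s) + h (x + t) := by
  have hst : 0 < s + t := by linarith
  have h1 := hconc.2 (Set.mem_univ x) (Set.mem_univ (x + s + t))
    (le_of_lt (by positivity : (0:ℝ) < t / (s + t)))
    (le_of_lt (by positivity : (0:ℝ) < s / (s + t)))
    (by field_simp; ring)
  have h2 := hconc.2 (Set.mem_univ x) (Set.mem_univ (x + s + t))
    (le_of_lt (by positivity : (0:ℝ) < s / (s + t)))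
    (le_of_lt (by positivity : (0:ℝ) < t / (s + t)))
    (by field_simp)
  simp only [smul_eq_mul] at h1 h2
  have e1 : t / (s + t) * x + s / (s + t) * (x + s + t) = x + s := by
    field_simp; ring
  have e2 : s / (s + t) * x + t / (s + t) * (x + s + t) = x + t := by
    field_simp; ring
  rw [e1] at h1
  rw [e2] at h2
  have h3 : h x + h (x + s + t) =
      (t / (s + t) * h x + s / (s + t) * h (x + s + t)) +
      (s / (s + t) * h x + t / (s + t) * h (x + s + t)) := by
    field_simp; ring
  linarith

/-- Majorization-test inequality for the null reduction on `A` of the 5-party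
inequality `Q^[5]`: for concave `h`, real `a` and positive `b, c, d, e`,
`h(a+b+c) + h(a+b+d) + h(a+c+d) + h(a+d+e)
  ≥ h(a+b) + h(a+d) + h(a+c+d+e) + h(a+b+c+d)`. -/
theorem stmt9 (h : ℝ → ℝ) (hconc : ConcaveOn ℝ Set.univ h)
    (a b c d e : ℝ) (hb : 0 < b) (hc : 0 < c) (hd : 0 < d) (he : 0 < e) :
    h (a + b) + h (a + d) + h (a + c + d + e) + h (a + b + c + d) ≤
      h (a + b + c) + h (a + b + d) + h (a + c + d) + h (a + d + e) := by
  have h1 := key_concave h hconc (a + b) c d hc hd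
  have h2 := key_concave h hconc (a + d) c e hc he
  have e1 : a + d + c = a + c + d := by ring
  have e2 : a + d + c + e = a + c + d + e := by ring
  rw [e1] at h2
  linarith
end
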